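/- Let p > 1 with conjugate exponent q = p/(p−1), α > 0, ε > 0, T ∈ (0,∞], let E : ℝ^d → ℝ be convex with α|x|^p − 1/α ≤ E(x) for all x ∈ ℝ^d, and let f : (0,T) → ℝ^d be measurable with ∫_0^T e^{-t/ε} |f(t)|^q dt < ∞. Define the admissible class 𝒦 of measurable u : (0,T) → ℝ^d such that ∫_0^T e^{-t/ε} |u(t)|^p dt < ∞ and t ↦ e^{-t/ε} E(u(t)) is integrable, and the WIDE functional W^ε(u) = ∫_0^T e^{-t/ε} ( E(u(t)) − f(t)·u(t) ) dt on 𝒦. Then (a) W^ε attains its minimum on 𝒦, and (b) every minimizer u of W^ε on 𝒦 satisfies, for almost every t ∈ (0,T), the subdifferential inclusion E(v) ≥ E(u(t)) + f(t)·(v − u(t)) for all v ∈ ℝ^d. -/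

import Mathlib

/-!
The integrand of `W^ε` depends on `u` only through the value `u t`, so it suffices to minimize
`x ↦ E x - ⟪f t, x⟫` for every `t` separately, with minimizers chosen measurably in `t`.
The minimizers of the strongly convex regularizations `E x - ⟪y, x⟫ + γ ‖x‖²` are
`γ⁻¹`-Lipschitz in `y`, and as `γ ↓ 0` their squared norms increase to a finite limit, which
makes them a Cauchy sequence converging to a minimizer of `E - ⟪y, ·⟫` (Tikhonov
regularization). The limit is a Borel selection `g`, and `g ∘ f` is admissible by Young's
inequality and the `p`-growth of `E`. A minimizer `u` of `W^ε` cannot do better than `g ∘ f`,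
whose integrand is pointwise minimal, so the two integrands agree almost everywhere.
-/

open scoped RealInnerProductSpace

/-- The real time interval `(0,T)` associated with a horizon `T ∈ (0,∞]`. -/
def wideTimeInterval (T : ENNReal) : Set ℝ :=
  {t : ℝ | 0 < t ∧ ENNReal.ofReal t < T}

/-- The admissible class `𝒦`: measurable `u : (0,T) → ℝ^d` with
`∫_0^T e^{-t/ε}|u(t)|^p dt < ∞` and `t ↦ e^{-t/ε} E(u(t))` integrable. -/
def wideAdmissible (d : ℕ) (p ε : ℝ) (E : EuclideanSpace ℝ (Fin d) → ℝ) (T : ENNReal) :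
    Set (ℝ → EuclideanSpace ℝ (Fin d)) :=
  {u | Measurable u
    ∧ (∫⁻ t in wideTimeInterval T, ENNReal.ofReal (Real.exp (-t / ε) * ‖u t‖ ^ p)) < ⊤
    ∧ MeasureTheory.IntegrableOn (fun t => Real.exp (-t / ε) * E (u t))
        (wideTimeInterval T)}

/-- The quasistatic WIDE functional `W^ε(u) = ∫_0^T e^{-t/ε} (E(u(t)) − f(t)·u(t)) dt`. -/
noncomputable def quasistaticWide (d : ℕ) (ε : ℝ) (E : EuclideanSpace ℝ (Fin d) → ℝ)
    (T : ENNReal) (f u : ℝ → EuclideanSpace ℝ (Fin d)) : ℝ :=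
  ∫ t in wideTimeInterval T, Real.exp (-t / ε) * (E (u t) - ⟪f t, u t⟫)

open MeasureTheory Set Filter Topology

theorem Real.exists_mul_le_mul_rpow_add_mul_rpow {p q : ℝ} (hpq : p.HolderConjugate q) {δ : ℝ}
    (hδ : 0 < δ) : ∃ C, ∀ a b : ℝ, 0 ≤ a → 0 ≤ b → a * b ≤ δ * b ^ p + C * a ^ q := by
  set lam : ℝ := (δ * p) ^ p⁻¹
  have hlam : 0 < lam := Real.rpow_pos_of_pos (mul_pos hδ hpq.pos) _
  have hlam_p : lam ^ p = δ * p := by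
    rw [← Real.rpow_mul (mul_pos hδ hpq.pos).le, inv_mul_cancel₀ hpq.pos.ne', Real.rpow_one]
  refine ⟨(lam ^ q * q)⁻¹, fun a b ha hb => ?_⟩
  have h := Real.young_inequality_of_nonneg (mul_nonneg hb hlam.le) (div_nonneg ha hlam.le) hpq
  rw [Real.mul_rpow hb hlam.le, Real.div_rpow ha hlam.le, hlam_p] at h
  have hlamq : 0 < lam ^ q := Real.rpow_pos_of_pos hlam q
  have e0 : b * lam * (a / lam) = a * b := by field_simp
  have e1 : b ^ p * (δ * p) / p = δ * b ^ p := by field_simp [hpq.pos.ne']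
  have e2 : a ^ q / lam ^ q / q = (lam ^ q * q)⁻¹ * a ^ q := by field_simp
  rw [e0, e1, e2] at h
  exact h

theorem ae_isMin_of_integral_le_of_isMin {Ω X : Type*} [MeasurableSpace Ω] {μ : Measure Ω}
    {ρ : Ω → ℝ} (hρ : ∀ t, 0 < ρ t) {Φ : Ω → X → ℝ} {u w : Ω → X}
    (hu : Integrable (fun t => ρ t * Φ t (u t)) μ) (hw : Integrable (fun t => ρ t * Φ t (w t)) μ)
    (hwmin : ∀ t x, Φ t (w t) ≤ Φ t x)
    (hle : ∫ t, ρ t * Φ t (u t) ∂μ ≤ ∫ t, ρ t * Φ t (w t) ∂μ) :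
    ∀ᵐ t ∂μ, ∀ x, Φ t (u t) ≤ Φ t x := by
  have hwu : (fun t => ρ t * Φ t (w t)) ≤ᵐ[μ] fun t => ρ t * Φ t (u t) :=
    ae_of_all _ fun t => mul_le_mul_of_nonneg_left (hwmin t (u t)) (hρ t).le
  have heq := (integral_eq_iff_of_ae_le hw hu hwu).1 (le_antisymm (integral_mono_ae hw hu hwu) hle)
  filter_upwards [heq] with t ht x
  rw [← mul_right_inj' (hρ t).ne'|>.1 ht]
  exact hwmin t x

section NormedSpace

variable {V : Type*} [NormedAddCommGroup V]

theorem tendsto_cocompact_atTop_of_mul_rpow_norm_sub_le [ProperSpace V] {F : V → ℝ}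
    {a p K : ℝ} (ha : 0 < a) (hp : 0 < p) (hF : ∀ x, a * ‖x‖ ^ p - K ≤ F x) :
    Tendsto F (cocompact V) atTop :=
  tendsto_atTop_mono hF <| tendsto_atTop_add_const_right _ _ <|
    ((tendsto_rpow_atTop hp).const_mul_atTop ha).comp tendsto_norm_cocompact_atTop

theorem sq_norm_le_of_isMin_add_sq_norm_of_lt {G : V → ℝ} {γ γ' : ℝ} {z z' : V} (hγ : γ' < γ)
    (hz : ∀ x, G z + γ * ‖z‖ ^ 2 ≤ G x + γ * ‖x‖ ^ 2)
    (hz' : ∀ x, G z' + γ' * ‖z'‖ ^ 2 ≤ G x + γ' * ‖x‖ ^ 2) :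
    ‖z‖ ^ 2 ≤ ‖z'‖ ^ 2 := by
  have := hz z'
  have := hz' z
  nlinarith

variable [InnerProductSpace ℝ V]

theorem norm_midpoint_sq (x z : V) :
    ‖(1 / 2 : ℝ) • x + (1 / 2 : ℝ) • z‖ ^ 2 = (‖x‖ ^ 2 + ‖z‖ ^ 2) / 2 - ‖x - z‖ ^ 2 / 4 := by
  have h := parallelogram_law_with_norm ℝ x z
  rw [← smul_add, norm_smul, mul_pow]
  norm_num
  linarith

theorem ConvexOn.sub_inner {E : V → ℝ} (hE : ConvexOn ℝ univ E) (y : V) :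
    ConvexOn ℝ univ (fun x => E x - ⟪y, x⟫) :=
  hE.sub ((innerₛₗ ℝ y).concaveOn convex_univ)

theorem exists_rpow_norm_sub_le_sub_inner {p q α c : ℝ} (hpq : p.HolderConjugate q)
    (hα : 0 < α) {E : V → ℝ} (hE : ∀ x, α * ‖x‖ ^ p - c ≤ E x) :
    ∃ C, ∀ y x, α / 2 * ‖x‖ ^ p - (C * ‖y‖ ^ q + c) ≤ E x - ⟪y, x⟫ := by
  obtain ⟨C, hC⟩ := Real.exists_mul_le_mul_rpow_add_mul_rpow hpq (half_pos hα)
  refine ⟨C, fun y x => ?_⟩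
  have := hC ‖y‖ ‖x‖ (norm_nonneg y) (norm_nonneg x)
  have := real_inner_le_norm y x
  linarith [hE x]

theorem ConvexOn.quadratic_growth_of_isMin_add_sq_norm {G : V → ℝ} (hG : ConvexOn ℝ univ G)
    {γ : ℝ} {z : V} (hz : ∀ x, G z + γ * ‖z‖ ^ 2 ≤ G x + γ * ‖x‖ ^ 2) (x : V) :
    G z + γ * ‖z‖ ^ 2 + γ / 2 * ‖x - z‖ ^ 2 ≤ G x + γ * ‖x‖ ^ 2 := by
  have hmid := hz ((1 / 2 : ℝ) • x + (1 / 2 : ℝ) • z)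
  have hconv := hG.2 (mem_univ x) (mem_univ z) (by norm_num : (0 : ℝ) ≤ 1 / 2)
    (by norm_num : (0 : ℝ) ≤ 1 / 2) (by norm_num)
  rw [norm_midpoint_sq] at hmid
  simp only [smul_eq_mul] at hconv
  linarith

theorem ConvexOn.sq_norm_sub_le_of_isMin_add_sq_norm_of_lt {G : V → ℝ} {γ γ' : ℝ} {z z' : V}
    (hG : ConvexOn ℝ univ G) (hγ' : 0 ≤ γ') (hγ : γ' < γ)
    (hz : ∀ x, G z + γ * ‖z‖ ^ 2 ≤ G x + γ * ‖x‖ ^ 2)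
    (hz' : ∀ x, G z' + γ' * ‖z'‖ ^ 2 ≤ G x + γ' * ‖x‖ ^ 2) :
    ‖z' - z‖ ^ 2 ≤ 2 * (‖z'‖ ^ 2 - ‖z‖ ^ 2) := by
  have hgrowth := hG.quadratic_growth_of_isMin_add_sq_norm hz z'
  have hnorm := sq_norm_le_of_isMin_add_sq_norm_of_lt hγ hz hz'
  have hval := hz' z
  have : γ' * ‖z‖ ^ 2 ≤ γ' * ‖z'‖ ^ 2 := mul_le_mul_of_nonneg_left hnorm hγ'
  nlinarith

theorem ConvexOn.exists_tendsto_of_isMin_add_sq_norm [CompleteSpace V] {G : V → ℝ}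
    (hG : ConvexOn ℝ univ G) (hGc : Continuous G) {P : V} (hP : ∀ x, G P ≤ G x)
    {γ : ℕ → ℝ} (hγpos : ∀ n, 0 < γ n) (hγanti : StrictAnti γ) (hγ0 : Tendsto γ atTop (𝓝 0))
    {z : ℕ → V} (hz : ∀ n x, G (z n) + γ n * ‖z n‖ ^ 2 ≤ G x + γ n * ‖x‖ ^ 2) :
    ∃ b, (∀ x, G b ≤ G x) ∧ Tendsto z atTop (𝓝 b) := by
  have hmono : Monotone fun n => ‖z n‖ ^ 2 := monotone_nat_of_le_succ fun n =>
    sq_norm_le_of_isMin_add_sq_norm_of_lt (hγanti (Nat.lt_succ_self n)) (hz n) (hz (n + 1))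
  have hbdd : BddAbove (range fun n => ‖z n‖ ^ 2) := by
    refine ⟨‖P‖ ^ 2, forall_mem_range.2 fun n => ?_⟩
    have := hz n P
    have := hP (z n)
    nlinarith [hγpos n]
  have hlim := tendsto_atTop_ciSup hmono hbdd
  have hcauchy : CauchySeq z := by
    refine Metric.cauchySeq_iff'.2 fun ε hε => ?_
    obtain ⟨N, hN⟩ := Metric.tendsto_atTop.1 hlim (ε ^ 2 / 2) (by positivity)
    refine ⟨N, fun n hn => ?_⟩
    rcases hn.eq_or_lt with rfl | hlt
    · simpa using hε
    have hsub := hG.sq_norm_sub_le_of_isMin_add_sq_norm_of_lt (hγpos n).le (hγanti hlt)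
      (hz N) (hz n)
    have hsup : ‖z n‖ ^ 2 ≤ ⨆ i, ‖z i‖ ^ 2 := le_ciSup hbdd n
    have hclose := hN N le_rfl
    rw [Real.dist_eq, abs_lt] at hclose
    rw [dist_eq_norm]
    exact lt_of_pow_lt_pow_left₀ 2 hε.le (by linarith)
  obtain ⟨b, hb⟩ := cauchySeq_tendsto_of_complete hcauchy
  refine ⟨b, fun x => ?_, hb⟩
  have hle (n : ℕ) : G (z n) ≤ G x + γ n * ‖x‖ ^ 2 := by
    nlinarith [hz n x, hγpos n, sq_nonneg ‖z n‖]
  refine le_of_tendsto_of_tendsto' ((hGc.tendsto b).comp hb) ?_ hle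
  simpa using (hγ0.mul_const (‖x‖ ^ 2)).const_add (G x)

theorem ConvexOn.inner_sub_ge_of_isMin_sub_inner_add_sq_norm {E : V → ℝ} (hE : ConvexOn ℝ univ E)
    {γ : ℝ} {y y' z z' : V}
    (hz : ∀ x, E z - ⟪y, z⟫ + γ * ‖z‖ ^ 2 ≤ E x - ⟪y, x⟫ + γ * ‖x‖ ^ 2)
    (hz' : ∀ x, E z' - ⟪y', z'⟫ + γ * ‖z'‖ ^ 2 ≤ E x - ⟪y', x⟫ + γ * ‖x‖ ^ 2) :
    γ * ‖z - z'‖ ^ 2 ≤ ⟪y - y', z - z'⟫ := by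
  have h := (hE.sub_inner y).quadratic_growth_of_isMin_add_sq_norm hz z'
  have h' := (hE.sub_inner y').quadratic_growth_of_isMin_add_sq_norm hz' z
  rw [norm_sub_rev] at h
  simp only [inner_sub_left, inner_sub_right] at h h' ⊢
  linarith

theorem exists_continuous_isMin_sub_inner_add_sq_norm [ProperSpace V] {E : V → ℝ}
    (hE : ConvexOn ℝ univ E) (hEc : Continuous E)
    (hcoer : ∀ y, Tendsto (fun x => E x - ⟪y, x⟫) (cocompact V) atTop) {γ : ℝ} (hγ : 0 < γ) :
    ∃ g : V → V, Continuous g ∧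
      ∀ y x, E (g y) - ⟪y, g y⟫ + γ * ‖g y‖ ^ 2 ≤ E x - ⟪y, x⟫ + γ * ‖x‖ ^ 2 := by
  have hmin (y : V) : ∃ z, ∀ x, E z - ⟪y, z⟫ + γ * ‖z‖ ^ 2 ≤ E x - ⟪y, x⟫ + γ * ‖x‖ ^ 2 :=
    ((hEc.sub (continuous_const.inner continuous_id)).add
        (continuous_const.mul (continuous_norm.pow 2))).exists_forall_le
      (tendsto_atTop_mono (fun x => le_add_of_nonneg_right (mul_nonneg hγ.le (sq_nonneg ‖x‖)))
        (hcoer y))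
  choose g hg using hmin
  refine ⟨g, (LipschitzWith.of_dist_le' (K := γ⁻¹) fun y y' => ?_).continuous, hg⟩
  have hmono := hE.inner_sub_ge_of_isMin_sub_inner_add_sq_norm (hg y) (hg y')
  have hcs := real_inner_le_norm (y - y') (g y - g y')
  rw [dist_eq_norm, dist_eq_norm, inv_mul_eq_div, le_div_iff₀ hγ]
  rcases (norm_nonneg (g y - g y')).eq_or_lt with h0 | hpos
  · rw [← h0, zero_mul]; exact norm_nonneg _
  · nlinarith

theorem ConvexOn.exists_measurable_isMin_sub_inner [FiniteDimensional ℝ V] [MeasurableSpace V]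
    [BorelSpace V] {E : V → ℝ} (hE : ConvexOn ℝ univ E)
    (hcoer : ∀ y, Tendsto (fun x => E x - ⟪y, x⟫) (cocompact V) atTop) :
    ∃ g : V → V, Measurable g ∧ ∀ y x, E (g y) - ⟪y, g y⟫ ≤ E x - ⟪y, x⟫ := by
  have hEc : Continuous E := continuousOn_univ.1 (hE.continuousOn isOpen_univ)
  have hreg (n : ℕ) := exists_continuous_isMin_sub_inner_add_sq_norm hE hEc hcoer
    (γ := 1 / ((n : ℝ) + 1)) (by positivity)
  choose g hgc hg using hreg
  have hanti : StrictAnti fun n : ℕ => 1 / ((n : ℝ) + 1) :=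
    strictAnti_nat_of_succ_lt fun n => by gcongr; linarith
  have hlim (y : V) : ∃ b, (∀ x, E b - ⟪y, b⟫ ≤ E x - ⟪y, x⟫) ∧
      Tendsto (fun n => g n y) atTop (𝓝 b) := by
    have hGc : Continuous fun x => E x - ⟪y, x⟫ := hEc.sub (continuous_const.inner continuous_id)
    obtain ⟨P, hP⟩ := hGc.exists_forall_le (hcoer y)
    exact (hE.sub_inner y).exists_tendsto_of_isMin_add_sq_norm hGc hP (fun n => by positivity)
      hanti tendsto_one_div_add_atTop_nhds_zero_nat (fun n => hg n y)
  choose b hbmin hb using hlim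
  exact ⟨b, measurable_of_tendsto_metrizable (fun n => (hgc n).measurable)
    (tendsto_pi_nhds.2 hb), hbmin⟩

end NormedSpace

section Wide

variable {d : ℕ} {p q α ε : ℝ} {T : ENNReal} {E : EuclideanSpace ℝ (Fin d) → ℝ}
  {f : ℝ → EuclideanSpace ℝ (Fin d)}

theorem integrableOn_exp_neg_div_wideTimeInterval (hε : 0 < ε) (T : ENNReal) :
    IntegrableOn (fun t => Real.exp (-t / ε)) (wideTimeInterval T) := by
  have h : IntegrableOn (fun t => Real.exp (-t / ε)) (Ioi 0) := by
    simpa [neg_div, div_eq_inv_mul] using exp_neg_integrableOn_Ioi 0 (inv_pos.2 hε)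
  exact h.mono_set fun t ht => ht.1

theorem lintegral_exp_neg_div_mul_rpow_norm_lt_top_iff {F : Type*} [NormedAddCommGroup F]
    [MeasurableSpace F] [OpensMeasurableSpace F] {μ : Measure ℝ} {u : ℝ → F}
    (hu : Measurable u) (r : ℝ) :
    (∫⁻ t, ENNReal.ofReal (Real.exp (-t / ε) * ‖u t‖ ^ r) ∂μ) < ⊤ ↔
      Integrable (fun t => Real.exp (-t / ε) * ‖u t‖ ^ r) μ := by
  rw [lt_top_iff_ne_top]
  refine lintegral_ofReal_ne_top_iff_integrable ?_ (ae_of_all _ fun t => by positivity)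
  exact ((measurable_id.neg.div_const ε).exp.mul (hu.norm.pow_const r)).aestronglyMeasurable

theorem integrable_exp_neg_div_mul_inner {μ : Measure ℝ} (hpq : p.HolderConjugate q)
    {u : ℝ → EuclideanSpace ℝ (Fin d)} (hfmeas : Measurable f) (humeas : Measurable u)
    (hf : Integrable (fun t => Real.exp (-t / ε) * ‖f t‖ ^ q) μ)
    (hu : Integrable (fun t => Real.exp (-t / ε) * ‖u t‖ ^ p) μ) :
    Integrable (fun t => Real.exp (-t / ε) * ⟪f t, u t⟫) μ := by
  refine Integrable.mono' ((hf.div_const q).add (hu.div_const p))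
    ((measurable_id.neg.div_const ε).exp.mul (hfmeas.inner humeas)).aestronglyMeasurable
    (ae_of_all _ fun t => ?_)
  have hyoung := Real.young_inequality_of_nonneg (norm_nonneg (f t)) (norm_nonneg (u t)) hpq.symm
  have hcs := abs_real_inner_le_norm (f t) (u t)
  rw [Real.norm_eq_abs, abs_mul, Real.abs_exp]
  calc Real.exp (-t / ε) * |⟪f t, u t⟫|
      ≤ Real.exp (-t / ε) * (‖f t‖ ^ q / q + ‖u t‖ ^ p / p) := by gcongr; linarith
    _ = Real.exp (-t / ε) * ‖f t‖ ^ q / q + Real.exp (-t / ε) * ‖u t‖ ^ p / p := by ring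

theorem integrableOn_quasistaticWide_integrand (hpq : p.HolderConjugate q) (hfmeas : Measurable f)
    (hf : IntegrableOn (fun t => Real.exp (-t / ε) * ‖f t‖ ^ q) (wideTimeInterval T))
    {u : ℝ → EuclideanSpace ℝ (Fin d)} (hu : u ∈ wideAdmissible d p ε E T) :
    IntegrableOn (fun t => Real.exp (-t / ε) * (E (u t) - ⟪f t, u t⟫)) (wideTimeInterval T) := by
  obtain ⟨humeas, hup, huE⟩ := hu
  simp_rw [mul_sub]
  exact huE.sub (integrable_exp_neg_div_mul_inner hpq hfmeas humeas hf
    ((lintegral_exp_neg_div_mul_rpow_norm_lt_top_iff humeas p).1 hup))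

theorem mem_wideAdmissible_of_isMin (hpq : p.HolderConjugate q) (hα : 0 < α) (hε : 0 < ε)
    (hEc : Continuous E) (hcoer : ∀ x, α * ‖x‖ ^ p - 1 / α ≤ E x) (hfmeas : Measurable f)
    (hf : IntegrableOn (fun t => Real.exp (-t / ε) * ‖f t‖ ^ q) (wideTimeInterval T))
    {w : ℝ → EuclideanSpace ℝ (Fin d)} (hwmeas : Measurable w)
    (hw : ∀ t x, E (w t) - ⟪f t, w t⟫ ≤ E x - ⟪f t, x⟫) :
    w ∈ wideAdmissible d p ε E T := by
  obtain ⟨C, hC⟩ := exists_rpow_norm_sub_le_sub_inner hpq hα hcoer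
  have hexp := integrableOn_exp_neg_div_wideTimeInterval hε T
  have hval (t : ℝ) : E (w t) - ⟪f t, w t⟫ ≤ E 0 := by simpa using hw t 0
  have hexp_meas : Measurable fun t : ℝ => Real.exp (-t / ε) :=
    (measurable_id.neg.div_const ε).exp
  have hwp : IntegrableOn (fun t => Real.exp (-t / ε) * ‖w t‖ ^ p) (wideTimeInterval T) := by
    refine integrable_of_le_of_le (g₁ := 0)
      (g₂ := fun t => 2 / α * (E 0 + 1 / α) * Real.exp (-t / ε)
        + 2 / α * C * (Real.exp (-t / ε) * ‖f t‖ ^ q))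
      (hexp_meas.mul (hwmeas.norm.pow_const p)).aestronglyMeasurable
      (ae_of_all _ fun t => by positivity) (ae_of_all _ fun t => ?_) (integrable_zero _ _ _)
      ((hexp.const_mul _).add (hf.const_mul _))
    have hgrowth : α / 2 * ‖w t‖ ^ p ≤ E 0 + 1 / α + C * ‖f t‖ ^ q := by
      linarith [hC (f t) (w t), hval t]
    have hbound : ‖w t‖ ^ p ≤ 2 / α * (E 0 + 1 / α) + 2 / α * C * ‖f t‖ ^ q :=
      calc ‖w t‖ ^ p = 2 / α * (α / 2 * ‖w t‖ ^ p) := by field_simp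
        _ ≤ 2 / α * (E 0 + 1 / α + C * ‖f t‖ ^ q) := by gcongr
        _ = _ := by ring
    have := mul_le_mul_of_nonneg_left hbound (Real.exp_pos (-t / ε)).le
    dsimp only
    linarith
  refine ⟨hwmeas, (lintegral_exp_neg_div_mul_rpow_norm_lt_top_iff hwmeas p).2 hwp, ?_⟩
  refine integrable_of_le_of_le (g₁ := fun t => -(1 / α) * Real.exp (-t / ε))
    (g₂ := fun t => E 0 * Real.exp (-t / ε) + Real.exp (-t / ε) * ⟪f t, w t⟫)
    (hexp_meas.mul (hEc.measurable.comp hwmeas)).aestronglyMeasurable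
    (ae_of_all _ fun t => ?_) (ae_of_all _ fun t => ?_) (hexp.const_mul _)
    ((hexp.const_mul _).add (integrable_exp_neg_div_mul_inner hpq hfmeas hwmeas hf hwp))
  · have hlow : -(1 / α) ≤ E (w t) := by
      have := hcoer (w t)
      have : 0 ≤ α * ‖w t‖ ^ p := by positivity
      linarith
    have := mul_le_mul_of_nonneg_left hlow (Real.exp_pos (-t / ε)).le
    dsimp only
    linarith
  · have := mul_le_mul_of_nonneg_left (hval t) (Real.exp_pos (-t / ε)).le
    dsimp only
    linarith

end Wide

theorem wide_quasistatic_evolution_general (d : ℕ) (p q α ε : ℝ)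
    (hp : 1 < p) (hq : q = p / (p - 1)) (hα : 0 < α) (hε : 0 < ε)
    (T : ENNReal)
    (E : EuclideanSpace ℝ (Fin d) → ℝ) (hconv : ConvexOn ℝ Set.univ E)
    (hcoer : ∀ x : EuclideanSpace ℝ (Fin d), α * ‖x‖ ^ p - 1 / α ≤ E x)
    (f : ℝ → EuclideanSpace ℝ (Fin d)) (hfmeas : Measurable f)
    (hf : (∫⁻ t in wideTimeInterval T, ENNReal.ofReal (Real.exp (-t / ε) * ‖f t‖ ^ q)) < ⊤) :
    (∃ u ∈ wideAdmissible d p ε E T, ∀ v ∈ wideAdmissible d p ε E T,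
        quasistaticWide d ε E T f u ≤ quasistaticWide d ε E T f v)
      ∧ ∀ u ∈ wideAdmissible d p ε E T,
          (∀ v ∈ wideAdmissible d p ε E T,
            quasistaticWide d ε E T f u ≤ quasistaticWide d ε E T f v) →
          ∀ᵐ t ∂(MeasureTheory.volume.restrict (wideTimeInterval T)),
            ∀ v : EuclideanSpace ℝ (Fin d), E (u t) + ⟪f t, v - u t⟫ ≤ E v := by
  have hpq : p.HolderConjugate q := (Real.holderConjugate_iff_eq_conjExponent hp).2 hq
  have hEc : Continuous E := continuousOn_univ.1 (hconv.continuousOn isOpen_univ)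
  have hfint := (lintegral_exp_neg_div_mul_rpow_norm_lt_top_iff hfmeas q).1 hf
  obtain ⟨C, hC⟩ := exists_rpow_norm_sub_le_sub_inner hpq hα hcoer
  obtain ⟨g, hgmeas, hgmin⟩ := hconv.exists_measurable_isMin_sub_inner fun y =>
    tendsto_cocompact_atTop_of_mul_rpow_norm_sub_le (half_pos hα) hpq.pos (hC y)
  have hw : g ∘ f ∈ wideAdmissible d p ε E T :=
    mem_wideAdmissible_of_isMin hpq hα hε hEc hcoer hfmeas hfint (hgmeas.comp hfmeas)
      fun t => hgmin (f t)
  have hint {u} (hu : u ∈ wideAdmissible d p ε E T) :=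
    integrableOn_quasistaticWide_integrand hpq hfmeas hfint hu
  refine ⟨⟨g ∘ f, hw, fun v hv => integral_mono (hint hw) (hint hv) fun t =>
    mul_le_mul_of_nonneg_left (hgmin _ _) (Real.exp_pos _).le⟩, fun u hu humin => ?_⟩
  filter_upwards [ae_isMin_of_integral_le_of_isMin (fun t => Real.exp_pos (-t / ε))
    (Φ := fun t x => E x - ⟪f t, x⟫) (hint hu) (hint hw) (fun t => hgmin (f t)) (humin _ hw)]
    with t ht v
  rw [inner_sub_right]
  linarith [ht v]

/-- quasistatic evolution, `ρ = 0`, `D = 0`. Let `p > 1` with conjugate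
exponent `q = p/(p−1)`, `α > 0`, `ε > 0`, `T ∈ (0,∞]`, let `E : ℝ^d → ℝ` be convex with
`α|x|^p − 1/α ≤ E(x)`, and let `f` be measurable with `∫_0^T e^{-t/ε}|f|^q < ∞`. Then
(a) `W^ε` attains its minimum on `𝒦`, and (b) every minimizer `u` of `W^ε` on `𝒦`
satisfies `f(t) ∈ ∂E(u(t))` for a.e. `t ∈ (0,T)`, i.e.
`E(v) ≥ E(u(t)) + f(t)·(v − u(t))` for all `v ∈ ℝ^d`. -/
theorem wide_quasistatic_evolution (d : ℕ) (p q α ε : ℝ)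
    (hp : 1 < p) (hq : q = p / (p - 1)) (hα : 0 < α) (hε : 0 < ε)
    (T : ENNReal) (hT : 0 < T)
    (E : EuclideanSpace ℝ (Fin d) → ℝ) (hconv : ConvexOn ℝ Set.univ E)
    (hcoer : ∀ x : EuclideanSpace ℝ (Fin d), α * ‖x‖ ^ p - 1 / α ≤ E x)
    (f : ℝ → EuclideanSpace ℝ (Fin d)) (hfmeas : Measurable f)
    (hf : (∫⁻ t in wideTimeInterval T, ENNReal.ofReal (Real.exp (-t / ε) * ‖f t‖ ^ q)) < ⊤) :
    (∃ u ∈ wideAdmissible d p ε E T, ∀ v ∈ wideAdmissible d p ε E T,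
        quasistaticWide d ε E T f u ≤ quasistaticWide d ε E T f v)
      ∧ ∀ u ∈ wideAdmissible d p ε E T,
          (∀ v ∈ wideAdmissible d p ε E T,
            quasistaticWide d ε E T f u ≤ quasistaticWide d ε E T f v) →
          ∀ᵐ t ∂(MeasureTheory.volume.restrict (wideTimeInterval T)),
            ∀ v : EuclideanSpace ℝ (Fin d), E (u t) + ⟪f t, v - u t⟫ ≤ E v :=
  wide_quasistatic_evolution_general d p q α ε hp hq hα hε T E hconv hcoer f hfmeas hf
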